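/- Let a, b, c be complex numbers with Re(c − a − b) < 0, s = c − a − b not an integer, and none of a, b, c, c−a, c−b a nonpositive integer. Then as n → ∞, S_n(a,b;c) = ∑_{k=0}^{n-1} (a)_k(b)_k/((c)_k k!) ∼ Γ(c) n^{a+b−c} / ((a+b−c) Γ(a)Γ(b)), i.e., S_n(a,b;c) · n^{c−a−b} → Γ(c)/((a+b−c)Γ(a)Γ(b)). -/

import Mathlib

/-!
Put `s = a + b - c`, so `0 < Re s`. Euler's limit for `Γ` gives `(x)_k k^(1-x) / k! → 1/Γ(x)`,
so the `k`-th term `t_k` of the series satisfies `t_k k^(1-s) → L = Γ(c) / (Γ(a) Γ(b))`. The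
increments `(k+1)^s - k^s` behave in the same way, `((k+1)^s - k^s) k^(1-s) → s`, and telescope
to `n^s`. So the remainder `t_k - (L/s) ((k+1)^s - k^s)` is `o((k+1)^σ - k^σ)` for `σ = Re s`;
these positive increments telescope to `n^σ → ∞`, so the partial sums of the remainder are
`o(n^σ)`, and `(∑_{k<n} t_k) n^(-s) → L/s`.
-/

open Filter Finset Complex Topology Asymptotics

/-- The Pochhammer (rising factorial) symbol `(x)_k` for complex `x`. -/
noncomputable def cpoch (x : ℂ) (k : ℕ) : ℂ := ∏ i ∈ Finset.range k, (x + i)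

theorem HasDerivAt.tendsto_natCast_mul_sub {𝕜 : Type*} [RCLike 𝕜] {f : 𝕜 → 𝕜} {f' x : 𝕜}
    (hf : HasDerivAt f f' x) :
    Tendsto (fun k : ℕ => (k : 𝕜) * (f (x + (k : 𝕜)⁻¹) - f x)) atTop (𝓝 f') := by
  have hseq : Tendsto (fun k : ℕ => x + (k : 𝕜)⁻¹) atTop (𝓝[≠] x) := by
    refine tendsto_nhdsWithin_iff.2 ⟨?_, ?_⟩
    · simpa using tendsto_const_nhds (x := x).add (tendsto_inv_atTop_nhds_zero_nat (𝕜 := 𝕜))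
    · filter_upwards [eventually_ne_atTop 0] with k hk
      simpa using hk
  refine ((hasDerivAt_iff_tendsto_slope.1 hf).comp hseq).congr' ?_
  filter_upwards [eventually_ne_atTop 0] with k hk
  simp only [Function.comp_apply, slope_def_field, add_sub_cancel_left]
  field_simp

theorem tendsto_natCast_succ_cpow_sub_cpow_mul (s : ℂ) :
    Tendsto (fun k : ℕ => (((k : ℂ) + 1) ^ s - (k : ℂ) ^ s) * (k : ℂ) ^ (1 - s)) atTop (𝓝 s) := by
  have hd : HasDerivAt (fun z : ℂ => z ^ s) s 1 := by
    simpa using (hasStrictDerivAt_cpow_const (c := s) one_mem_slitPlane).hasDerivAt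
  refine hd.tendsto_natCast_mul_sub.congr' ?_
  filter_upwards [eventually_ne_atTop 0] with k hk
  have hk' : (k : ℂ) ≠ 0 := Nat.cast_ne_zero.2 hk
  have hsplit : ((k : ℂ) + 1) ^ s = (k : ℂ) ^ s * (1 + (k : ℂ)⁻¹) ^ s := by
    have := mul_cpow_ofReal_nonneg (k.cast_nonneg : (0 : ℝ) ≤ k)
      (by positivity : (0 : ℝ) ≤ 1 + (k : ℝ)⁻¹) s
    push_cast at this
    rw [← this, mul_add, mul_one, mul_inv_cancel₀ hk']
  have hkk : (k : ℂ) ^ s * (k : ℂ) ^ (1 - s) = k := by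
    rw [← cpow_add _ _ hk', add_sub_cancel, cpow_one]
  rw [hsplit, one_cpow]
  linear_combination ((1 + (k : ℂ)⁻¹) ^ s - 1) * hkk.symm

theorem tendsto_natCast_succ_rpow_sub_rpow_mul (σ : ℝ) :
    Tendsto (fun k : ℕ => (((k : ℝ) + 1) ^ σ - (k : ℝ) ^ σ) * (k : ℝ) ^ (1 - σ)) atTop (𝓝 σ) := by
  rw [← tendsto_ofReal_iff]
  refine (tendsto_natCast_succ_cpow_sub_cpow_mul σ).congr fun k => ?_
  push_cast [ofReal_cpow (Nat.cast_nonneg _), ofReal_cpow (by positivity : (0 : ℝ) ≤ k + 1)]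
  rfl

theorem sum_range_natCast_succ_rpow_sub_rpow {σ : ℝ} (hσ : σ ≠ 0) (n : ℕ) :
    ∑ k ∈ range n, (((k : ℝ) + 1) ^ σ - (k : ℝ) ^ σ) = (n : ℝ) ^ σ := by
  simpa [Real.zero_rpow hσ] using sum_range_sub (fun k : ℕ => (k : ℝ) ^ σ) n

theorem sum_range_natCast_succ_cpow_sub_cpow {s : ℂ} (hs : s ≠ 0) (n : ℕ) :
    ∑ k ∈ range n, (((k : ℂ) + 1) ^ s - (k : ℂ) ^ s) = (n : ℂ) ^ s := by
  simpa [zero_cpow hs] using sum_range_sub (fun k : ℕ => (k : ℂ) ^ s) n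

theorem tendsto_zero_sum_range_mul_cpow_neg {s : ℂ} (hs : 0 < s.re) {e : ℕ → ℂ}
    (he : Tendsto (fun k : ℕ => e k * (k : ℂ) ^ (1 - s)) atTop (𝓝 0)) :
    Tendsto (fun n : ℕ => (∑ k ∈ range n, e k) * (n : ℂ) ^ (-s)) atTop (𝓝 0) := by
  set σ := s.re
  set h : ℕ → ℝ := fun k => ((k : ℝ) + 1) ^ σ - (k : ℝ) ^ σ
  have h_pos (k : ℕ) : 0 < h k := sub_pos.2 (Real.rpow_lt_rpow k.cast_nonneg (lt_add_one _) hs)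
  have h_sum (n : ℕ) : ∑ k ∈ range n, h k = (n : ℝ) ^ σ :=
    sum_range_natCast_succ_rpow_sub_rpow hs.ne' n
  have he_h : (fun k => ‖e k‖) =o[atTop] h := by
    rw [isLittleO_iff_tendsto fun k hk => absurd hk (h_pos k).ne']
    have hlim := he.norm.div (tendsto_natCast_succ_rpow_sub_rpow_mul σ) hs.ne'
    rw [norm_zero, zero_div] at hlim
    refine hlim.congr' ?_
    filter_upwards [eventually_ne_atTop 0] with k hk
    rw [Pi.div_apply, norm_mul, norm_natCast_cpow_of_pos (Nat.pos_of_ne_zero hk), sub_re, one_re,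
      mul_div_mul_right _ _ (Real.rpow_pos_of_pos (Nat.cast_pos.2 (Nat.pos_of_ne_zero hk)) _).ne']
  have hsum : (fun n => ‖∑ k ∈ range n, e k‖) =o[atTop] fun n : ℕ => (n : ℝ) ^ σ := by
    have h_top : Tendsto (fun n => ∑ k ∈ range n, h k) atTop atTop := by
      simp only [h_sum]; exact ((tendsto_rpow_atTop hs).comp tendsto_natCast_atTop_atTop :)
    simpa only [h_sum] using (he_h.of_norm_left.sum_range (fun k => (h_pos k).le) h_top).norm_left
  refine squeeze_zero_norm' ?_ hsum.tendsto_div_nhds_zero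
  filter_upwards [eventually_ne_atTop 0] with n hn
  rw [norm_mul, norm_natCast_cpow_of_pos (Nat.pos_of_ne_zero hn), neg_re,
    Real.rpow_neg n.cast_nonneg, div_eq_mul_inv]

theorem tendsto_sum_range_mul_cpow_neg {s : ℂ} (hs : 0 < s.re) {t : ℕ → ℂ} {L : ℂ}
    (ht : Tendsto (fun k : ℕ => t k * (k : ℂ) ^ (1 - s)) atTop (𝓝 L)) :
    Tendsto (fun n : ℕ => (∑ k ∈ range n, t k) * (n : ℂ) ^ (-s)) atTop (𝓝 (L / s)) := by
  have hs0 : s ≠ 0 := fun h => by simp [h] at hs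
  set g : ℕ → ℂ := fun k => L / s * (((k : ℂ) + 1) ^ s - (k : ℂ) ^ s)
  have hg : Tendsto (fun k : ℕ => g k * (k : ℂ) ^ (1 - s)) atTop (𝓝 L) := by
    simpa [g, mul_assoc, div_mul_cancel₀ _ hs0] using
      (tendsto_natCast_succ_cpow_sub_cpow_mul s).const_mul (L / s)
  have hrem := tendsto_zero_sum_range_mul_cpow_neg hs (e := t - g)
    (by simpa [sub_mul] using ht.sub hg)
  rw [← add_zero (L / s)]
  refine (hrem.const_add (L / s)).congr' ?_
  filter_upwards [eventually_ne_atTop 0] with n hn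
  have hn' : (n : ℂ) ≠ 0 := Nat.cast_ne_zero.2 hn
  have hg_sum : ∑ k ∈ range n, g k = L / s * (n : ℂ) ^ s := by
    rw [← mul_sum, sum_range_natCast_succ_cpow_sub_cpow hs0]
  have hpow : (n : ℂ) ^ s * (n : ℂ) ^ (-s) = 1 := by
    rw [← cpow_add _ _ hn', add_neg_cancel, cpow_zero]
  simp only [Pi.sub_apply, sum_sub_distrib, hg_sum]
  linear_combination -(L / s) * hpow

theorem cpoch_ne_zero {x : ℂ} (hx : ∀ j : ℕ, x ≠ -(j : ℂ)) (n : ℕ) : cpoch x n ≠ 0 :=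
  prod_ne_zero_iff.2 fun i _ => by rw [Ne, add_eq_zero_iff_eq_neg]; exact hx i

theorem GammaSeq_eq_cpoch (x : ℂ) (n : ℕ) :
    GammaSeq x n = (n : ℂ) ^ x * n.factorial / (cpoch x n * (x + n)) := by
  rw [GammaSeq, prod_range_succ, cpoch]

theorem tendsto_cpoch_mul_cpow_div_factorial {x : ℂ} (hx : ∀ j : ℕ, x ≠ -(j : ℂ)) :
    Tendsto (fun n : ℕ => cpoch x n * (n : ℂ) ^ (1 - x) / n.factorial) atTop
      (𝓝 (Gamma x)⁻¹) := by
  have hlim := (tendsto_natCast_div_add_atTop x).mul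
    ((GammaSeq_tendsto_Gamma x).inv₀ (Gamma_ne_zero hx))
  rw [one_mul] at hlim
  refine hlim.congr' ?_
  filter_upwards [eventually_ne_atTop 0] with n hn
  have hn' : (n : ℂ) ≠ 0 := Nat.cast_ne_zero.2 hn
  have hxn : (n : ℂ) + x ≠ 0 := by
    rw [add_comm, Ne, add_eq_zero_iff_eq_neg]; exact hx n
  rw [GammaSeq_eq_cpoch, cpow_sub _ _ hn', cpow_one, inv_div]
  field_simp
  ring

theorem tendsto_hypergeometric_term_mul_cpow {a b c : ℂ} (ha : ∀ j : ℕ, a ≠ -(j : ℂ))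
    (hb : ∀ j : ℕ, b ≠ -(j : ℂ)) (hc : ∀ j : ℕ, c ≠ -(j : ℂ)) :
    Tendsto (fun k : ℕ => cpoch a k * cpoch b k / (cpoch c k * k.factorial) *
      (k : ℂ) ^ (1 - (a + b - c))) atTop (𝓝 (Gamma c / (Gamma a * Gamma b))) := by
  have hlim := ((tendsto_cpoch_mul_cpow_div_factorial ha).mul
    (tendsto_cpoch_mul_cpow_div_factorial hb)).div (tendsto_cpoch_mul_cpow_div_factorial hc)
      (inv_ne_zero (Gamma_ne_zero hc))
  rw [← mul_inv, inv_div_inv] at hlim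
  refine hlim.congr' ?_
  filter_upwards [eventually_ne_atTop 0] with k hk
  have hk' : (k : ℂ) ≠ 0 := Nat.cast_ne_zero.2 hk
  have hpow : (k : ℂ) ^ (1 - a) * (k : ℂ) ^ (1 - b) =
      (k : ℂ) ^ (1 - c) * (k : ℂ) ^ (1 - (a + b - c)) := by
    rw [← cpow_add _ _ hk', ← cpow_add _ _ hk']
    ring_nf
  have hc' := cpoch_ne_zero hc k
  have hkc : (k : ℂ) ^ (1 - c) ≠ 0 := cpow_ne_zero_iff.2 (Or.inl hk')
  have hfac : (k.factorial : ℂ) ≠ 0 := Nat.cast_ne_zero.2 k.factorial_ne_zero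
  simp only [Pi.div_apply]
  field_simp
  linear_combination cpoch a k * cpoch b k * hpow

theorem hill_divergent_asymptotic_general (a b c : ℂ) (hs : (c - a - b).re < 0)
    (ha : ∀ j : ℕ, a ≠ -(j : ℂ)) (hb : ∀ j : ℕ, b ≠ -(j : ℂ)) (hc : ∀ j : ℕ, c ≠ -(j : ℂ)) :
    Filter.Tendsto
      (fun n : ℕ =>
        (∑ k ∈ Finset.range n,
            cpoch a k * cpoch b k / (cpoch c k * (Nat.factorial k : ℂ)))
          * (n : ℂ) ^ (c - a - b))
      Filter.atTop
      (nhds (Complex.Gamma c / ((a + b - c) * Complex.Gamma a * Complex.Gamma b))) := by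
  have hneg : c - a - b = -(a + b - c) := by ring
  have hsre : 0 < (a + b - c).re := by rw [hneg, neg_re] at hs; linarith
  rw [hneg]
  convert tendsto_sum_range_mul_cpow_neg hsre
    (tendsto_hypergeometric_term_mul_cpow ha hb hc) using 2
  rw [div_div]
  congr 1
  ring

/-- Hill's leading asymptotic when `Re(c−a−b) < 0` and `c−a−b` is not an integer:
`S_n(a,b;c) · n^{c−a−b} → Γ(c)/((a+b−c)Γ(a)Γ(b))`. -/
theorem hill_divergent_asymptotic (a b c : ℂ) (hs : (c - a - b).re < 0)
    (hsint : ∀ z : ℤ, c - a - b ≠ (z : ℂ))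
    (ha : ∀ j : ℕ, a ≠ -(j : ℂ)) (hb : ∀ j : ℕ, b ≠ -(j : ℂ)) (hc : ∀ j : ℕ, c ≠ -(j : ℂ))
    (hca : ∀ j : ℕ, c - a ≠ -(j : ℂ)) (hcb : ∀ j : ℕ, c - b ≠ -(j : ℂ)) :
    Filter.Tendsto
      (fun n : ℕ =>
        (∑ k ∈ Finset.range n,
            cpoch a k * cpoch b k / (cpoch c k * (Nat.factorial k : ℂ)))
          * (n : ℂ) ^ (c - a - b))
      Filter.atTop
      (nhds (Complex.Gamma c / ((a + b - c) * Complex.Gamma a * Complex.Gamma b))) :=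
  hill_divergent_asymptotic_general a b c hs ha hb hc
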